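/- Let q_n(a_1,...,a_n) be the denominator of the continued fraction [a_1,...,a_n] with positive integer entries. For 1 ≤ k ≤ n-1, deleting the entry a_k yields the bound (a_k+1)/2 ≤ q_n(a_1,...,a_n)/q_{n-1}(a_1,...,a_{k-1},a_{k+1},...,a_n) ≤ a_k+1. -/
import Mathlib


/-- The continuant: `contDen [a₁, …, aₙ]` is the denominator `qₙ(a₁, …, aₙ)` of the
continued fraction `[a₁, …, aₙ]`. -/
def contDen : List ℕ → ℕ
  | [] => 1
  | [a] => a
  | a :: b :: l => a * contDen (b :: l) + contDen l

lemma one_le_contDen : ∀ l : List ℕ, (∀ b ∈ l, 1 ≤ b) → 1 ≤ contDen l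
  | [], _ => le_refl 1
  | [a], h => by simpa [contDen] using h a (by simp)
  | a :: b :: l, h => by
    have h1 : 1 ≤ contDen (b :: l) := one_le_contDen (b :: l) (fun x hx => h x (by simp [hx]))
    have ha : 1 ≤ a := h a (by simp)
    simp only [contDen]
    nlinarith

lemma contDen_tail_le : ∀ l : List ℕ, (∀ b ∈ l, 1 ≤ b) → contDen l.tail ≤ contDen l
  | [], _ => le_refl _
  | [a], h => by simpa [contDen] using h a (by simp)
  | a :: b :: l, h => by
    have h1 : 1 ≤ contDen (b :: l) := one_le_contDen (b :: l) (fun x hx => h x (by simp [hx]))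
    have ha : 1 ≤ a := h a (by simp)
    simp only [contDen, List.tail_cons]
    nlinarith

/-- deleting one letter `a` (not the last one) from a word of positive
integers changes the continuant by a factor between `(a+1)/2` and `a+1`:
`(a+1)/2 ≤ qₙ(a₁,…,aₙ)/q_{n-1}(a₁,…,a_{k-1},a_{k+1},…,aₙ) ≤ a+1`. -/
theorem contDen_erase_bounds (l₁ l₂ : List ℕ) (a : ℕ) (ha : 1 ≤ a) (h₂ : l₂ ≠ [])
    (hp₁ : ∀ b ∈ l₁, 1 ≤ b) (hp₂ : ∀ b ∈ l₂, 1 ≤ b) :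
    (a + 1) * contDen (l₁ ++ l₂) ≤ 2 * contDen (l₁ ++ a :: l₂) ∧
      contDen (l₁ ++ a :: l₂) ≤ (a + 1) * contDen (l₁ ++ l₂) := by
  obtain ⟨c, t, rfl⟩ : ∃ c t, l₂ = c :: t := by
    cases l₂ with
    | nil => exact absurd rfl h₂
    | cons c t => exact ⟨c, t, rfl⟩
  clear h₂
  have hK2 : 1 ≤ contDen (c :: t) := one_le_contDen _ hp₂
  have hK2' : contDen t ≤ contDen (c :: t) := contDen_tail_le (c :: t) hp₂
  induction l₁ using contDen.induct with
  | case1 =>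
    simp only [List.nil_append, contDen]
    constructor <;> nlinarith
  | case2 b =>
    have hb : 1 ≤ b := hp₁ b (by simp)
    have h3 : contDen t ≤ b * contDen (c :: t) :=
      hK2'.trans (Nat.le_mul_of_pos_left _ hb)
    simp only [List.cons_append, List.nil_append, contDen]
    constructor <;> nlinarith [h3, Nat.mul_le_mul_left a h3]
  | case3 b d l ih1 ih2 =>
    have hb : 1 ≤ b := hp₁ b (by simp)
    obtain ⟨ih1l, ih1r⟩ := ih1 (fun x hx => hp₁ x (by simp at hx ⊢; tauto))
    obtain ⟨ih2l, ih2r⟩ := ih2 (fun x hx => hp₁ x (by simp at hx ⊢; tauto))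
    simp only [List.cons_append, List.append_eq, contDen] at *
    constructor <;> nlinarith [Nat.mul_le_mul_left b ih1l, Nat.mul_le_mul_left b ih1r]
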